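/- arXiv:1506.04257 — 2 statements merged into one kernel-verified Lean document; each statement's English description precedes it below -/
import Mathlib

section
/- (Sanov upper bound) For any set S of empirical distributions of p samples over n categories and any full-support distribution Q, the probability that p i.i.d. samples from Q have empirical distribution in S is at most (p+1)^n exp(-p · min_{P̂ ∈ S} D(P̂||Q)). -/
open scoped Classical

/-- `P` is a probability mass function on `n` categories. -/
def isPMF {n : ℕ} (P : Fin n → ℝ) : Prop :=
  (∀ i, 0 ≤ P i) ∧ ∑ i, P i = 1

/-- Kullback–Leibler divergence `D(P‖Q) = ∑ i, P i * log (P i / Q i)`. -/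
noncomputable def KL {n : ℕ} (P Q : Fin n → ℝ) : ℝ :=
  ∑ i, P i * Real.log (P i / Q i)

/-- Empirical distribution (type) of the sequence `x` of `p` samples over `n` categories. -/
noncomputable def emp {n p : ℕ} (x : Fin p → Fin n) (i : Fin n) : ℝ :=
  ((Finset.univ.filter (fun j => x j = i)).card : ℝ) / p

/-- Probability of observing the sequence `x` under `p` i.i.d. draws from `Q`. -/
noncomputable def seqProb {n p : ℕ} (Q : Fin n → ℝ) (x : Fin p → Fin n) : ℝ :=
  ∏ j, Q (x j)

/-- Probability, under `p` i.i.d. draws from `Q`, that the empirical distribution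
equals `P` exactly. -/
noncomputable def typeProb (p : ℕ) {n : ℕ} (Q : Fin n → ℝ) (P : Fin n → ℝ) : ℝ :=
  ∑ x : Fin p → Fin n, if emp x = P then seqProb Q x else 0

/-- Probability, under `p` i.i.d. draws from `Q`, that the empirical distribution
lies in the set `S`. -/
noncomputable def setProb (p : ℕ) {n : ℕ} (Q : Fin n → ℝ) (S : Set (Fin n → ℝ)) : ℝ :=
  ∑ x : Fin p → Fin n, if emp x ∈ S then seqProb Q x else 0

/-!
Under `Q`, a sequence `x` with type `P` has probability `∏ Q i ^ (p * P i)`, which equals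
`exp (-p D(P‖Q))` times its probability `∏ P i ^ (p * P i)` under `P` itself. Hence the type
class of `P` has `Q`-probability at most `exp (-p D(P‖Q))`. A type is determined by its counts in
`{0, …, p}`, so there are at most `(p + 1) ^ n` of them, and a union bound over `S` finishes.
-/

open Finset Real

noncomputable def occurrences {n p : ℕ} (x : Fin p → Fin n) (i : Fin n) : ℕ :=
  (univ.filter fun j => x j = i).card

section Types

variable {n p : ℕ}

lemma emp_eq_occurrences_div (x : Fin p → Fin n) (i : Fin n) :
    emp x i = (occurrences x i : ℝ) / p := rfl

lemma occurrences_le (x : Fin p → Fin n) (i : Fin n) : occurrences x i ≤ p := by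
  simpa [occurrences] using card_filter_le (univ : Finset (Fin p)) fun j => x j = i

lemma sum_occurrences (x : Fin p → Fin n) : ∑ i, occurrences x i = p := by
  simpa [occurrences] using
    (card_eq_sum_card_fiberwise fun j (_ : j ∈ (univ : Finset (Fin p))) => mem_univ (x j)).symm

lemma natCast_mul_emp (x : Fin p → Fin n) (i : Fin n) :
    (p : ℝ) * emp x i = occurrences x i := by
  rcases p.eq_zero_or_pos with rfl | hp
  · simp [occurrences]
  · rw [emp_eq_occurrences_div]
    field_simp

lemma emp_pos_of_occurrences_pos {x : Fin p → Fin n} {i : Fin n}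
    (h : 0 < occurrences x i) : 0 < emp x i :=
  div_pos (by exact_mod_cast h) (by exact_mod_cast h.trans_le (occurrences_le x i))

lemma emp_isPMF (hp : 0 < p) (x : Fin p → Fin n) : isPMF (emp x) := by
  refine ⟨fun i => by unfold emp; positivity, ?_⟩
  simp_rw [emp_eq_occurrences_div, ← sum_div]
  rw [← Nat.cast_sum, sum_occurrences, div_self (by positivity)]

lemma card_le_of_forall_exists_emp_eq (S : Finset (Fin n → ℝ))
    (hS : ∀ P ∈ S, ∃ x : Fin p → Fin n, emp x = P) : S.card ≤ (p + 1) ^ n := by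
  have hsub :
      S ⊆ univ.image fun c : Fin n → Fin (p + 1) => fun i => ((c i : ℕ) : ℝ) / p := by
    intro P hP
    obtain ⟨x, rfl⟩ := hS P hP
    exact mem_image.2 ⟨fun i => ⟨occurrences x i, Nat.lt_succ_of_le (occurrences_le x i)⟩,
      mem_univ _, rfl⟩
  calc S.card ≤ _ := card_le_card hsub
    _ ≤ _ := card_image_le
    _ = (p + 1) ^ n := by simp

end Types

section Probabilities

variable {n p : ℕ}

lemma seqProb_eq_prod_pow_occurrences (f : Fin n → ℝ) (x : Fin p → Fin n) :
    seqProb f x = ∏ i, f i ^ occurrences x i := by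
  rw [seqProb, ← prod_fiberwise' univ x f]
  simp [occurrences]

lemma seqProb_nonneg {f : Fin n → ℝ} (hf : ∀ i, 0 ≤ f i) (x : Fin p → Fin n) :
    0 ≤ seqProb f x :=
  prod_nonneg fun j _ => hf (x j)

lemma sum_seqProb {f : Fin n → ℝ} (hf : ∑ i, f i = 1) :
    ∑ x : Fin p → Fin n, seqProb f x = 1 := by
  simp only [seqProb]
  rw [← Fintype.sum_pow f p, hf, one_pow]

lemma typeProb_le_one {Q : Fin n → ℝ} (hQ : isPMF Q) (P : Fin n → ℝ) :
    typeProb p Q P ≤ 1 := by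
  calc typeProb p Q P ≤ ∑ x : Fin p → Fin n, seqProb Q x :=
        sum_le_sum fun x _ => by split_ifs <;> simp [seqProb_nonneg hQ.1]
    _ = 1 := sum_seqProb hQ.2

lemma setProb_coe_finset (Q : Fin n → ℝ) (S : Finset (Fin n → ℝ)) :
    setProb p Q S = ∑ P ∈ S, typeProb p Q P := by
  simp only [setProb, typeProb, mem_coe]
  rw [sum_comm]
  refine sum_congr rfl fun x _ => ?_
  rw [sum_ite_eq]

lemma pow_eq_exp_neg_mul_log_div_mul_pow {q a : ℝ} (hq : 0 < q) (ha : 0 < a) (c : ℕ) :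
    q ^ c = exp (-(c * log (a / q))) * a ^ c := by
  rw [log_div ha.ne' hq.ne', ← exp_log hq, ← exp_log ha, ← exp_nat_mul, ← exp_nat_mul,
    ← exp_add, exp_log hq, exp_log ha]
  ring_nf

lemma seqProb_eq_exp_neg_KL_mul {Q : Fin n → ℝ} (hQ : ∀ i, 0 < Q i) (x : Fin p → Fin n) :
    seqProb Q x = exp (-(p : ℝ) * KL (emp x) Q) * seqProb (emp x) x := by
  have hKL : -(p : ℝ) * KL (emp x) Q = ∑ i, -(occurrences x i * log (emp x i / Q i)) := by
    simp_rw [KL, mul_sum, ← natCast_mul_emp x, neg_mul, mul_assoc]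
  rw [hKL, exp_sum, seqProb_eq_prod_pow_occurrences, seqProb_eq_prod_pow_occurrences,
    ← prod_mul_distrib]
  refine prod_congr rfl fun i _ => ?_
  rcases (occurrences x i).eq_zero_or_pos with h | h
  · simp [h]
  · exact pow_eq_exp_neg_mul_log_div_mul_pow (hQ i) (emp_pos_of_occurrences_pos h) _

lemma typeProb_emp_eq_exp_neg_KL_mul {Q : Fin n → ℝ} (hQ : ∀ i, 0 < Q i)
    (x₀ : Fin p → Fin n) :
    typeProb p Q (emp x₀) =
      exp (-(p : ℝ) * KL (emp x₀) Q) * typeProb p (emp x₀) (emp x₀) := by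
  simp only [typeProb, mul_sum, mul_ite, mul_zero]
  refine sum_congr rfl fun x _ => ?_
  split_ifs with h
  · rw [seqProb_eq_exp_neg_KL_mul hQ, h]
  · rfl

lemma typeProb_emp_le_exp_neg_KL (hp : 0 < p) {Q : Fin n → ℝ} (hQ : ∀ i, 0 < Q i)
    (x₀ : Fin p → Fin n) : typeProb p Q (emp x₀) ≤ exp (-(p : ℝ) * KL (emp x₀) Q) := by
  rw [typeProb_emp_eq_exp_neg_KL_mul hQ]
  exact mul_le_of_le_one_right (exp_nonneg _) (typeProb_le_one (emp_isPMF hp x₀) _)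

end Probabilities

theorem sanov_upper_bound_general {n p : ℕ} (Q : Fin n → ℝ) (S : Finset (Fin n → ℝ))
    (hp : 0 < p) (hQpos : ∀ i, 0 < Q i) (hS : S.Nonempty)
    (htype : ∀ P ∈ S, ∃ x : Fin p → Fin n, emp x = P) :
    setProb p Q ↑S ≤
      ((p : ℝ) + 1) ^ n * Real.exp (-(p : ℝ) * S.inf' hS (fun P => KL P Q)) := by
  set m := S.inf' hS fun P => KL P Q
  have htypeProb : ∀ P ∈ S, typeProb p Q P ≤ exp (-(p : ℝ) * m) := by
    intro P hP
    obtain ⟨x, rfl⟩ := htype _ hP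
    refine (typeProb_emp_le_exp_neg_KL hp hQpos x).trans (exp_le_exp.2 ?_)
    simp only [neg_mul, neg_le_neg_iff]
    exact mul_le_mul_of_nonneg_left (inf'_le _ hP) (Nat.cast_nonneg p)
  have hcard : (S.card : ℝ) ≤ ((p : ℝ) + 1) ^ n := by
    exact_mod_cast card_le_of_forall_exists_emp_eq S htype
  calc setProb p Q ↑S = ∑ P ∈ S, typeProb p Q P := setProb_coe_finset Q S
    _ ≤ ∑ _P ∈ S, exp (-(p : ℝ) * m) := sum_le_sum htypeProb
    _ = S.card * exp (-(p : ℝ) * m) := by rw [sum_const, nsmul_eq_mul]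
    _ ≤ ((p : ℝ) + 1) ^ n * exp (-(p : ℝ) * m) := by gcongr

theorem sanov_upper_bound {n p : ℕ} (Q : Fin n → ℝ) (S : Finset (Fin n → ℝ))
    (hp : 0 < p) (hQ : isPMF Q) (hQpos : ∀ i, 0 < Q i) (hS : S.Nonempty)
    (htype : ∀ P ∈ S, ∃ x : Fin p → Fin n, emp x = P) :
    setProb p Q ↑S ≤
      ((p : ℝ) + 1) ^ n * Real.exp (-(p : ℝ) * S.inf' hS (fun P => KL P Q)) :=
  sanov_upper_bound_general Q S hp hQpos hS htype
end

section
/- (Closed-form solution) Let P̂, Q be distributions on n categories with Q full support, and suppose the ratios P̂_i/Q_i have a unique minimizer at index ℓ, with second-smallest ratio P̂_k/Q_k. For α ∈ [1 − P̂_ℓ − (P̂_k/Q_k)(1 − Q_ℓ), κ(P̂||Q)], the distribution P* defined by P*_ℓ = P̂_ℓ/(1−α) and P*_i = Q_i(1 − P̂_ℓ/(1−α))/(1 − Q_ℓ) for i ≠ ℓ is the unique minimizer of D(P||Q) over {P ∈ S^n : P_i ≤ P̂_i/(1−α) for all i}. -/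
/-- Separation distance `κ(P‖Q) = max_i (1 - P i / Q i)`. -/
noncomputable def sepDist {n : ℕ} [NeZero n] (P Q : Fin n → ℝ) : ℝ :=
  Finset.univ.sup' Finset.univ_nonempty (fun i => 1 - P i / Q i)

/-- `D*_α`: the minimum of `D(P‖Q)` over the probability distributions `P` with
`P i ≤ P̂ i / (1 - α)` for all `i`. -/
noncomputable def Dstar {n : ℕ} (Phat Q : Fin n → ℝ) (α : ℝ) : ℝ :=
  sInf ((fun P => KL P Q) '' {P : Fin n → ℝ | isPMF P ∧ ∀ i, P i ≤ Phat i / (1 - α)})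

open Real InformationTheory

lemma mul_log_div_sub_eq_mul_klFun {p r : ℝ} (h : r = 0 → p = 0) :
    p * log (p / r) - (p - r) = r * klFun (p / r) := by
  rcases eq_or_ne r 0 with hr | hr
  · simp [hr, h hr]
  · rw [klFun_apply]
    field_simp
    ring

section KL

variable {n : ℕ} {P Q R : Fin n → ℝ}

lemma KL_eq_sum_mul_klFun (hP : ∑ i, P i = 1) (hR : ∑ i, R i = 1)
    (hsupp : ∀ i, R i = 0 → P i = 0) :
    KL P R = ∑ i, R i * klFun (P i / R i) := by
  have hsub : ∑ i, (P i - R i) = 0 := by simp [Finset.sum_sub_distrib, hP, hR]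
  rw [KL, ← sub_zero (∑ i, _), ← hsub, ← Finset.sum_sub_distrib]
  exact Finset.sum_congr rfl fun i _ => mul_log_div_sub_eq_mul_klFun (hsupp i)

lemma KL_nonneg (hP : isPMF P) (hR : isPMF R) (hsupp : ∀ i, R i = 0 → P i = 0) :
    0 ≤ KL P R := by
  rw [KL_eq_sum_mul_klFun hP.2 hR.2 hsupp]
  exact Finset.sum_nonneg fun i _ =>
    mul_nonneg (hR.1 i) (klFun_nonneg (div_nonneg (hP.1 i) (hR.1 i)))

lemma eq_of_KL_eq_zero (hP : isPMF P) (hR : isPMF R) (hsupp : ∀ i, R i = 0 → P i = 0)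
    (h : KL P R = 0) : P = R := by
  rw [KL_eq_sum_mul_klFun hP.2 hR.2 hsupp] at h
  have hterm := (Finset.sum_eq_zero_iff_of_nonneg fun i _ =>
    mul_nonneg (hR.1 i) (klFun_nonneg (div_nonneg (hP.1 i) (hR.1 i)))).1 h
  funext i
  rcases eq_or_ne (R i) 0 with hRi | hRi
  · rw [hRi, hsupp i hRi]
  · have hkl := (mul_eq_zero.1 (hterm i (Finset.mem_univ i))).resolve_left hRi
    exact (div_eq_one_iff_eq hRi).1 ((klFun_eq_zero_iff (div_nonneg (hP.1 i) (hR.1 i))).1 hkl)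

lemma KL_eq_KL_add_sum_mul_log (h : ∀ i, P i ≠ 0 → R i ≠ 0 ∧ Q i ≠ 0) :
    KL P Q = KL P R + ∑ i, P i * log (R i / Q i) := by
  rw [KL, KL, ← Finset.sum_add_distrib]
  refine Finset.sum_congr rfl fun i _ => ?_
  rcases eq_or_ne (P i) 0 with hPi | hPi
  · simp [hPi]
  obtain ⟨hRi, hQi⟩ := h i hPi
  rw [← mul_add, ← log_mul (div_ne_zero hPi hRi) (div_ne_zero hRi hQi), div_mul_div_cancel₀ hRi]

end KL

lemma sepDist_eq_of_forall_div_le {n : ℕ} [NeZero n] {P Q : Fin n → ℝ} {ℓ : Fin n}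
    (h : ∀ i, P ℓ / Q ℓ ≤ P i / Q i) : sepDist P Q = 1 - P ℓ / Q ℓ :=
  le_antisymm (Finset.sup'_le _ _ fun i _ => by linarith [h i])
    (Finset.le_sup' (fun i => 1 - P i / Q i) (Finset.mem_univ ℓ))

lemma sum_compl_singleton_eq_one_sub {n : ℕ} {f : Fin n → ℝ} (hf : ∑ i, f i = 1) (ℓ : Fin n) :
    ∑ i ∈ {ℓ}ᶜ, f i = 1 - f ℓ := by
  rw [← hf, ← Finset.sum_add_sum_compl {ℓ} f, Finset.sum_singleton, add_sub_cancel_left]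

noncomputable def tiltAt {n : ℕ} (Q : Fin n → ℝ) (ℓ : Fin n) (t : ℝ) : Fin n → ℝ :=
  fun i => if i = ℓ then t else Q i * (1 - t) / (1 - Q ℓ)

namespace tiltAt

variable {n : ℕ} {Q : Fin n → ℝ} {ℓ : Fin n} {t : ℝ}

@[simp] lemma apply_self : tiltAt Q ℓ t ℓ = t := if_pos rfl

lemma apply_of_ne {i : Fin n} (hi : i ≠ ℓ) : tiltAt Q ℓ t i = Q i * (1 - t) / (1 - Q ℓ) :=
  if_neg hi

lemma apply_div_of_ne {i : Fin n} (hi : i ≠ ℓ) (hQi : Q i ≠ 0) :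
    tiltAt Q ℓ t i / Q i = (1 - t) / (1 - Q ℓ) := by
  rw [apply_of_ne hi, mul_div_assoc, mul_div_cancel_left₀ _ hQi]

lemma sum_eq_one (hQ : ∑ i, Q i = 1) (hQℓ : Q ℓ ≠ 1) : ∑ i, tiltAt Q ℓ t i = 1 := by
  have hQℓ' : 1 - Q ℓ ≠ 0 := sub_ne_zero.2 hQℓ.symm
  rw [Fintype.sum_eq_add_sum_compl ℓ, apply_self,
    Finset.sum_congr rfl fun i hi => apply_of_ne (by simpa using hi)]
  simp_rw [mul_div_assoc, ← Finset.sum_mul, sum_compl_singleton_eq_one_sub hQ]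
  field_simp
  ring

lemma _root_.isPMF_tiltAt (hQ : isPMF Q) (hQℓ : Q ℓ < 1) (ht0 : 0 ≤ t) (ht1 : t ≤ 1) :
    isPMF (tiltAt Q ℓ t) := by
  refine ⟨fun i => ?_, sum_eq_one hQ.2 hQℓ.ne⟩
  rcases eq_or_ne i ℓ with rfl | hi
  · simpa using ht0
  · rw [apply_of_ne hi]
    have := hQ.1 i
    have : 0 ≤ 1 - t := sub_nonneg.2 ht1
    have : 0 < 1 - Q ℓ := sub_pos.2 hQℓ
    positivity

lemma eq_zero_of_apply_eq_zero {P : Fin n → ℝ} (hQpos : ∀ i, 0 < Q i) (hQℓ : Q ℓ < 1)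
    (ht1 : t < 1) (hP : ∀ i, 0 ≤ P i) (hPℓ : P ℓ ≤ t) {i : Fin n} (h : tiltAt Q ℓ t i = 0) :
    P i = 0 := by
  rcases eq_or_ne i ℓ with rfl | hi
  · rw [apply_self] at h
    exact le_antisymm (h ▸ hPℓ) (hP i)
  · rw [apply_of_ne hi] at h
    have := hQpos i
    have : 0 < 1 - t := sub_pos.2 ht1
    have : 0 < 1 - Q ℓ := sub_pos.2 hQℓ
    exact absurd h (by positivity)

lemma sum_mul_log_div {P : Fin n → ℝ} (hQpos : ∀ i, 0 < Q i) (hP : ∑ i, P i = 1) :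
    ∑ i, P i * log (tiltAt Q ℓ t i / Q i) =
      P ℓ * log (t / Q ℓ) + (1 - P ℓ) * log ((1 - t) / (1 - Q ℓ)) := by
  rw [Fintype.sum_eq_add_sum_compl ℓ, apply_self, Finset.sum_congr rfl fun i hi => by
      rw [apply_div_of_ne (by simpa using hi) (hQpos i).ne'],
    ← Finset.sum_mul, sum_compl_singleton_eq_one_sub hP]

lemma KL_tiltAt_left (hQ : ∑ i, Q i = 1) (hQpos : ∀ i, 0 < Q i) (hQℓ : Q ℓ ≠ 1) :
    KL (tiltAt Q ℓ t) Q = t * log (t / Q ℓ) + (1 - t) * log ((1 - t) / (1 - Q ℓ)) := by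
  rw [KL, sum_mul_log_div hQpos (sum_eq_one hQ hQℓ), apply_self]

/-- The Pythagorean inequality for the I-projection of `Q` onto `{P | P ℓ ≤ t}`. -/
lemma KL_add_KL_le {P : Fin n → ℝ} (hQ : isPMF Q) (hQpos : ∀ i, 0 < Q i) (hQℓ : Q ℓ < 1)
    (hP : isPMF P) (hPℓ : P ℓ ≤ t) (htQ : t ≤ Q ℓ) :
    KL (tiltAt Q ℓ t) Q + KL P (tiltAt Q ℓ t) ≤ KL P Q := by
  have ht1 : t < 1 := htQ.trans_lt hQℓ
  have hsupp : ∀ i, P i ≠ 0 → tiltAt Q ℓ t i ≠ 0 ∧ Q i ≠ 0 := fun i hPi =>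
    ⟨mt (eq_zero_of_apply_eq_zero hQpos hQℓ ht1 hP.1 hPℓ) hPi, (hQpos i).ne'⟩
  have hlog_left : log (t / Q ℓ) ≤ 0 :=
    log_nonpos (div_nonneg ((hP.1 ℓ).trans hPℓ) (hQpos ℓ).le) (div_le_one_of_le₀ htQ (hQpos ℓ).le)
  have hlog_right : 0 ≤ log ((1 - t) / (1 - Q ℓ)) :=
    log_nonneg ((one_le_div (sub_pos.2 hQℓ)).2 (by linarith))
  rw [KL_eq_KL_add_sum_mul_log hsupp, sum_mul_log_div hQpos hP.2, KL_tiltAt_left hQ.2 hQpos hQℓ.ne]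
  nlinarith [mul_nonneg (sub_nonneg.2 hPℓ) (sub_nonneg.2 (hlog_left.trans hlog_right))]

end tiltAt

lemma tiltAt_le_div_one_sub {n : ℕ} {Phat Q : Fin n → ℝ} {ℓ : Fin n} {α c : ℝ}
    (hQpos : ∀ i, 0 < Q i) (hQℓ : Q ℓ < 1) (hα1 : α < 1) (hc : ∀ i, i ≠ ℓ → c ≤ Phat i / Q i)
    (hα : 1 - Phat ℓ - c * (1 - Q ℓ) ≤ α) (i : Fin n) :
    tiltAt Q ℓ (Phat ℓ / (1 - α)) i ≤ Phat i / (1 - α) := by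
  rcases eq_or_ne i ℓ with rfl | hi
  · rw [tiltAt.apply_self]
  have hα1' : 0 < 1 - α := sub_pos.2 hα1
  have hQℓ' : 0 < 1 - Q ℓ := sub_pos.2 hQℓ
  have hQi := hQpos i
  calc tiltAt Q ℓ (Phat ℓ / (1 - α)) i
      = Q i * ((1 - α - Phat ℓ) / (1 - Q ℓ)) / (1 - α) := by
        rw [tiltAt.apply_of_ne hi]
        field_simp
    _ ≤ Q i * c / (1 - α) := by
        gcongr
        rw [div_le_iff₀ hQℓ']
        linarith
    _ ≤ Phat i / (1 - α) := by
        gcongr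
        rw [mul_comm, ← le_div_iff₀ hQi]
        exact hc i hi

theorem closed_form_solution_general {n : ℕ} [NeZero n] (Phat Q : Fin n → ℝ) (α : ℝ)
    (ℓ k : Fin n)
    (hP : isPMF Phat) (hQ : isPMF Q) (hQpos : ∀ i, 0 < Q i)
    (hQl1 : Q ℓ < 1)
    (hratio : Phat ℓ / Q ℓ < Phat k / Q k)
    (hsecond : ∀ i, i ≠ ℓ → Phat k / Q k ≤ Phat i / Q i)
    (hαlb : 1 - Phat ℓ - (Phat k / Q k) * (1 - Q ℓ) ≤ α)
    (hαub : α ≤ sepDist Phat Q) (hα1 : α < 1) :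
    let Pstar : Fin n → ℝ := fun i =>
      if i = ℓ then Phat ℓ / (1 - α)
      else Q i * (1 - Phat ℓ / (1 - α)) / (1 - Q ℓ)
    (isPMF Pstar ∧ ∀ i, Pstar i ≤ Phat i / (1 - α)) ∧
      ∀ P : Fin n → ℝ, isPMF P → (∀ i, P i ≤ Phat i / (1 - α)) →
        KL Pstar Q ≤ KL P Q ∧ (KL P Q = KL Pstar Q → P = Pstar) := by
  intro Pstar
  rw [show Pstar = tiltAt Q ℓ (Phat ℓ / (1 - α)) from rfl]
  set t := Phat ℓ / (1 - α)
  have hmin : ∀ i, Phat ℓ / Q ℓ ≤ Phat i / Q i := fun i => by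
    rcases eq_or_ne i ℓ with rfl | hi
    exacts [le_rfl, hratio.le.trans (hsecond i hi)]
  have htQ : t ≤ Q ℓ := by
    rw [sepDist_eq_of_forall_div_le hmin, le_sub_comm, div_le_iff₀ (hQpos ℓ)] at hαub
    rw [div_le_iff₀ (sub_pos.2 hα1)]
    linarith
  have ht0 : 0 ≤ t := div_nonneg (hP.1 ℓ) (sub_pos.2 hα1).le
  have hPstar := isPMF_tiltAt hQ hQl1 ht0 (htQ.trans hQl1.le)
  refine ⟨⟨hPstar, tiltAt_le_div_one_sub hQpos hQl1 hα1 hsecond hαlb⟩, fun P hPmf hPfeas => ?_⟩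
  have hPℓ : P ℓ ≤ t := hPfeas ℓ
  have hsupp : ∀ i, tiltAt Q ℓ t i = 0 → P i = 0 := fun i =>
    tiltAt.eq_zero_of_apply_eq_zero hQpos hQl1 (htQ.trans_lt hQl1) hPmf.1 hPℓ
  have hpyth := tiltAt.KL_add_KL_le hQ hQpos hQl1 hPmf hPℓ htQ
  have hgibbs := KL_nonneg hPmf hPstar hsupp
  exact ⟨by linarith, fun h => eq_of_KL_eq_zero hPmf hPstar hsupp (by linarith)⟩

theorem closed_form_solution {n : ℕ} [NeZero n] (Phat Q : Fin n → ℝ) (α : ℝ)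
    (ℓ k : Fin n)
    (hP : isPMF Phat) (hQ : isPMF Q) (hQpos : ∀ i, 0 < Q i)
    (hQl1 : Q ℓ < 1) (hkl : k ≠ ℓ)
    (hratio : Phat ℓ / Q ℓ < Phat k / Q k)
    (hsecond : ∀ i, i ≠ ℓ → Phat k / Q k ≤ Phat i / Q i)
    (hαlb : 1 - Phat ℓ - (Phat k / Q k) * (1 - Q ℓ) ≤ α)
    (hαub : α ≤ sepDist Phat Q) (hα1 : α < 1) :
    let Pstar : Fin n → ℝ := fun i =>
      if i = ℓ then Phat ℓ / (1 - α)
      else Q i * (1 - Phat ℓ / (1 - α)) / (1 - Q ℓ)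
    (isPMF Pstar ∧ ∀ i, Pstar i ≤ Phat i / (1 - α)) ∧
      ∀ P : Fin n → ℝ, isPMF P → (∀ i, P i ≤ Phat i / (1 - α)) →
        KL Pstar Q ≤ KL P Q ∧ (KL P Q = KL Pstar Q → P = Pstar) :=
  closed_form_solution_general Phat Q α ℓ k hP hQ hQpos hQl1 hratio hsecond hαlb hαub hα1
end
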